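/- For every problem instance (N, M, V, G) with |N| > Δ(G), there exists a feasible α-approximate MMS allocation with α = 1/2 if Δ(G) = 1, α = 3/7 if Δ(G) = 2, and α = 2/(Δ(G) + 2) if Δ(G) > 2 (so α > 1/Δ(G) when Δ(G) > 2). (In the paper, such an allocation is moreover produced by a polynomial-time algorithm.) -/

import Mathlib

open Finset

/-- `A` is a (complete) allocation of all items among `n` agents:
the bundles are pairwise disjoint and together cover all items. -/
def IsAllocation {M : Type*} [Fintype M] [DecidableEq M] {n : ℕ}
    (A : Fin n → Finset M) : Prop :=
  (∀ i i' : Fin n, i ≠ i' → Disjoint (A i) (A i')) ∧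
    Finset.univ.biUnion A = (Finset.univ : Finset M)

/-- An allocation is feasible if every bundle is an independent set of the
conflict graph `G`, i.e., no bundle contains two adjacent items. -/
def FeasibleAlloc {M : Type*} {n : ℕ} (G : SimpleGraph M)
    (A : Fin n → Finset M) : Prop :=
  ∀ i : Fin n, ∀ j ∈ A i, ∀ j' ∈ A i, ¬ G.Adj j j'

/-- Envy-freeness up to one good: every agent `i` values its own bundle at
least as much as any other agent's bundle after removing the item of that
bundle that `i` values most. -/
def EF1 {M : Type*} {n : ℕ} (v : Fin n → M → ℝ) (A : Fin n → Finset M) : Prop :=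
  ∀ i i' : Fin n, ∀ h : (A i').Nonempty,
    ∑ j ∈ A i, v i j ≥ (∑ j ∈ A i', v i j) - (A i').sup' h (v i)

/-- The maximin share of an agent with (additive) valuation `v`, for dividing
the items of `M'` into `n` bundles, each of which must be an independent set of
the conflict graph `G`: the largest value `x` such that some feasible
`n`-partition of `M'` has every bundle worth at least `x` (expressed as the
supremum of the minimum bundle value over all feasible `n`-partitions). -/
noncomputable def mmsOn {M : Type*} [Fintype M] [DecidableEq M] (n : ℕ)
    (G : SimpleGraph M) (M' : Finset M) (v : M → ℝ) : ℝ :=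
  sSup {x : ℝ | ∃ A : Fin n → Finset M,
    (∀ i i' : Fin n, i ≠ i' → Disjoint (A i) (A i')) ∧
    Finset.univ.biUnion A = M' ∧
    (∀ i : Fin n, ∀ j ∈ A i, ∀ j' ∈ A i, ¬ G.Adj j j') ∧
    x = ⨅ i : Fin n, ∑ j ∈ A i, v j}

section helpers
variable {M : Type*} [Fintype M] [DecidableEq M]

lemma extend_alloc (G : SimpleGraph M) [DecidableRel G.Adj] {N : ℕ} (hN : G.maxDegree < N)
    (L : Finset M) :
    ∀ A : Fin N → Finset M,
      (∀ i i', i ≠ i' → Disjoint (A i) (A i')) →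
      (∀ i, ∀ x ∈ A i, ∀ y ∈ A i, ¬ G.Adj x y) →
      (∀ i, Disjoint (A i) L) →
      ∃ A' : Fin N → Finset M, (∀ i, A i ⊆ A' i) ∧
        (∀ i i', i ≠ i' → Disjoint (A' i) (A' i')) ∧
        (∀ i, ∀ x ∈ A' i, ∀ y ∈ A' i, ¬ G.Adj x y) ∧
        Finset.univ.biUnion A' = Finset.univ.biUnion A ∪ L := by
  induction L using Finset.induction_on with
  | empty =>
      intro A h1 h2 _
      exact ⟨A, fun _ => subset_rfl, h1, h2, by simp⟩
  | @insert j s hjs ihs =>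
      intro A h1 h2 h3
      have hslot : ∃ i₀ : Fin N, ∀ x ∈ A i₀, ¬ G.Adj j x := by
        by_contra hcon
        push_neg at hcon
        choose f hf hadj using hcon
        have hinj : Function.Injective f := by
          intro a b hab
          by_contra hne
          exact (Finset.disjoint_left.1 (h1 a b hne) (hf a)) (hab ▸ hf b)
        have hle : (Finset.univ : Finset (Fin N)).card ≤ (G.neighborFinset j).card := by
          apply Finset.card_le_card_of_injOn f
          · intro a _
            rw [Finset.mem_coe, SimpleGraph.mem_neighborFinset]
            exact hadj a
          · exact hinj.injOn
        rw [Finset.card_univ, Fintype.card_fin, SimpleGraph.card_neighborFinset_eq_degree] at hle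
        exact absurd (hle.trans (G.degree_le_maxDegree j)) (Nat.not_le.2 hN)
      obtain ⟨i₀, hi₀⟩ := hslot
      have hjA : ∀ i, j ∉ A i := fun i => Finset.disjoint_right.1 (h3 i) (Finset.mem_insert_self j s)
      set A₁ := Function.update A i₀ (insert j (A i₀)) with hA₁def
      have hA₁ : ∀ i, A₁ i = if i = i₀ then insert j (A i₀) else A i := by
        intro i
        by_cases hi : i = i₀
        · subst hi; simp [hA₁def]
        · simp [hA₁def, Function.update_of_ne hi, hi]
      have h1' : ∀ i i', i ≠ i' → Disjoint (A₁ i) (A₁ i') := by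
        intro a b hab
        rw [hA₁ a, hA₁ b]
        by_cases ha : a = i₀
        · rw [if_pos ha]
          have hb2 : ¬ b = i₀ := fun hb2 => hab (ha.trans hb2.symm)
          rw [if_neg hb2, Finset.disjoint_insert_left]
          exact ⟨hjA b, ha ▸ h1 a b hab⟩
        · rw [if_neg ha]
          by_cases hb2 : b = i₀
          · rw [if_pos hb2, Finset.disjoint_insert_right]
            exact ⟨hjA a, hb2 ▸ h1 a b hab⟩
          · rw [if_neg hb2]
            exact h1 a b hab
      have h2' : ∀ i, ∀ x ∈ A₁ i, ∀ y ∈ A₁ i, ¬ G.Adj x y := by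
        intro i x hx y hy
        rw [hA₁ i] at hx hy
        by_cases hi : i = i₀
        · rw [if_pos hi, Finset.mem_insert] at hx hy
          subst hi
          rcases hx with rfl | hx <;> rcases hy with rfl | hy
          · exact G.loopless.irrefl _
          · exact hi₀ y hy
          · intro h; exact hi₀ x hx h.symm
          · exact h2 _ x hx y hy
        · simp only [if_neg hi] at hx hy
          exact h2 i x hx y hy
      have h3' : ∀ i, Disjoint (A₁ i) s := by
        intro i
        rw [hA₁ i]
        by_cases hi : i = i₀
        · rw [if_pos hi, Finset.disjoint_insert_left]
          exact ⟨hjs, (h3 i₀).mono_right (Finset.subset_insert _ _)⟩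
        · rw [if_neg hi]
          exact (h3 i).mono_right (Finset.subset_insert _ _)
      obtain ⟨A', hsub, hd', hi', hc'⟩ := ihs A₁ h1' h2' h3'
      refine ⟨A', fun i => ?_, hd', hi', ?_⟩
      · refine subset_trans ?_ (hsub i)
        conv_rhs => rw [hA₁ i]
        by_cases hi : i = i₀
        · rw [if_pos hi, hi]
          exact Finset.subset_insert _ _
        · rw [if_neg hi]
      · rw [hc']
        have : Finset.univ.biUnion A₁ = insert j (Finset.univ.biUnion A) := by
          ext x
          simp only [Finset.mem_biUnion, Finset.mem_univ, true_and, Finset.mem_insert]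
          constructor
          · rintro ⟨i, hx⟩
            rw [hA₁ i] at hx
            by_cases hi : i = i₀
            · rw [if_pos hi, Finset.mem_insert] at hx
              rcases hx with rfl | hx
              · exact Or.inl rfl
              · exact Or.inr ⟨i₀, hx⟩
            · rw [if_neg hi] at hx
              exact Or.inr ⟨i, hx⟩
          · rintro (rfl | ⟨i, hx⟩)
            · exact ⟨i₀, by rw [hA₁ i₀, if_pos rfl]; exact Finset.mem_insert_self _ _⟩
            · refine ⟨i, ?_⟩
              rw [hA₁ i]
              by_cases hi : i = i₀
              · rw [if_pos hi]
                exact Finset.mem_insert_of_mem (hi ▸ hx)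
              · rw [if_neg hi]
                exact hx
        rw [this]
        ext x
        simp only [Finset.mem_union, Finset.mem_insert]
        tauto
lemma core (G : SimpleGraph M) [DecidableRel G.Adj] {n : ℕ}
    (v : Fin n → M → ℝ) (hv : ∀ i j, 0 ≤ v i j)
    (μ τ : Fin n → ℝ) (hμ0 : ∀ i, 0 ≤ μ i) (hτ0 : ∀ i, 0 ≤ τ i)
    (hb : ∀ i, ∀ b : ℕ, (3*(b:ℝ)+1) * τ i ≤ ((b:ℝ)+1) * μ i ∨
      (2*(b:ℝ)+(G.maxDegree:ℝ)+1) * τ i ≤ ((b:ℝ)+1) * μ i)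
    (K : Fin (G.maxDegree + 1) → Finset M)
    (hKd : ∀ m m', m ≠ m' → Disjoint (K m) (K m'))
    (hKi : ∀ m, ∀ x ∈ K m, ∀ y ∈ K m, ¬ G.Adj x y)
    (hKc : Finset.univ.biUnion K = Finset.univ) :
    ∀ (u : ℕ) (U : Finset (Fin n)) (R : Finset M) (b : ℕ), U.card = u →
      (∀ i ∈ U, ∃ (P : Fin n → Finset M) (T : Finset (Fin n)),
        (∀ t t', t ≠ t' → Disjoint (P t) (P t')) ∧
        (∀ t, ∀ x ∈ P t, ∀ y ∈ P t, ¬ G.Adj x y) ∧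
        Finset.univ.biUnion P = Finset.univ ∧
        U.card + b ≤ T.card ∧
        ∑ t ∈ T, max 0 (μ i - ∑ j ∈ P t ∩ R, v i j) ≤ 2*(b:ℝ)* τ i) →
      ∃ A : Fin n → Finset M, (∀ i, A i ⊆ R) ∧
        (∀ i i', i ≠ i' → Disjoint (A i) (A i')) ∧
        (∀ i, ∀ x ∈ A i, ∀ y ∈ A i, ¬ G.Adj x y) ∧
        (∀ i ∈ U, τ i ≤ ∑ j ∈ A i, v i j) := by
  classical
  intro u
  induction u with
  | zero =>
      intro U R b hcard hINV
      rw [Finset.card_eq_zero] at hcard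
      subst hcard
      exact ⟨fun _ => ∅, fun _ => Finset.empty_subset _,
        fun _ _ _ => Finset.disjoint_empty_left _,
        fun _ x hx => absurd hx (Finset.notMem_empty x),
        fun i hi => absurd hi (Finset.notMem_empty i)⟩
  | succ u ih =>
      intro U R b hcard hINV
      have hUne : U.Nonempty := by
        rw [← Finset.card_pos, hcard]; omega
      obtain ⟨i₀, hi₀⟩ := hUne
      -- Step 1: there is some feasible bundle worth τ to some unsatisfied agent
      have hwit : ∃ B : Finset M, B ⊆ R ∧ (∀ x ∈ B, ∀ y ∈ B, ¬ G.Adj x y) ∧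
          ∃ i ∈ U, τ i ≤ ∑ j ∈ B, v i j := by
        obtain ⟨P, T, hPd, hPi, hPc, hTc, hTs⟩ := hINV i₀ hi₀
        have hU1 : 1 ≤ U.card := Finset.card_pos.2 ⟨i₀, hi₀⟩
        have hTne : T.Nonempty := by
          rw [← Finset.card_pos]; omega
        have hTb : ((b:ℝ)+1) ≤ (T.card : ℝ) := by
          have : b + 1 ≤ T.card := by omega
          exact_mod_cast this
        rcases hb i₀ b with h1 | h2
        · -- case A: a nearly untouched bundle of the own partition
          obtain ⟨t₀, ht₀, hmin⟩ :=
            T.exists_min_image (fun t => max 0 (μ i₀ - ∑ j ∈ P t ∩ R, v i₀ j)) hTne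
          refine ⟨P t₀ ∩ R, Finset.inter_subset_right, ?_, i₀, hi₀, ?_⟩
          · intro x hx y hy
            exact hPi t₀ x (Finset.mem_of_mem_inter_left hx) y (Finset.mem_of_mem_inter_left hy)
          · set m := max 0 (μ i₀ - ∑ j ∈ P t₀ ∩ R, v i₀ j) with hm
            have hm0 : 0 ≤ m := le_max_left _ _
            have hsum : (T.card : ℝ) * m ≤ ∑ t ∈ T, max 0 (μ i₀ - ∑ j ∈ P t ∩ R, v i₀ j) := by
              have := Finset.card_nsmul_le_sum T
                (fun t => max 0 (μ i₀ - ∑ j ∈ P t ∩ R, v i₀ j)) m hmin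
              simpa [nsmul_eq_mul] using this
            have h3 : ((b:ℝ)+1) * m ≤ 2*(b:ℝ)*τ i₀ := by
              have : ((b:ℝ)+1) * m ≤ (T.card : ℝ) * m := by nlinarith
              linarith [hsum, hTs]
            have h4 : μ i₀ - ∑ j ∈ P t₀ ∩ R, v i₀ j ≤ m := le_max_right _ _
            have hbpos : (0:ℝ) < (b:ℝ)+1 := by positivity
            nlinarith [h1, h3, h4, hbpos, hμ0 i₀, hτ0 i₀]
        · -- case B: there is enough value left in total; use a color class
          have hptw : ∀ t ∈ T, μ i₀ - max 0 (μ i₀ - ∑ j ∈ P t ∩ R, v i₀ j)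
              ≤ ∑ j ∈ P t ∩ R, v i₀ j := by
            intro t _
            have := le_max_right 0 (μ i₀ - ∑ j ∈ P t ∩ R, v i₀ j)
            linarith
          have hsum1 : (T.card : ℝ) * μ i₀ - ∑ t ∈ T, max 0 (μ i₀ - ∑ j ∈ P t ∩ R, v i₀ j)
              ≤ ∑ t ∈ T, ∑ j ∈ P t ∩ R, v i₀ j := by
            have := Finset.sum_le_sum hptw
            rw [Finset.sum_sub_distrib, Finset.sum_const, nsmul_eq_mul] at this
            linarith
          have hsum2 : ∑ t ∈ T, ∑ j ∈ P t ∩ R, v i₀ j ≤ ∑ j ∈ R, v i₀ j := by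
            rw [← Finset.sum_biUnion]
            · apply Finset.sum_le_sum_of_subset_of_nonneg
              · exact Finset.biUnion_subset.2 fun t _ => Finset.inter_subset_right
              · intro x _ _; exact hv i₀ x
            · intro a _ c _ hac
              exact ((hPd a c hac).mono Finset.inter_subset_left Finset.inter_subset_left)
          have hRval : ((G.maxDegree:ℝ)+1) * τ i₀ ≤ ∑ j ∈ R, v i₀ j := by
            have h5 : ((b:ℝ)+1) * μ i₀ ≤ (T.card : ℝ) * μ i₀ := by
              nlinarith [hμ0 i₀]
            nlinarith [hTs, hsum1, hsum2]
          -- split R along color classes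
          have hRsplit : ∑ j ∈ R, v i₀ j = ∑ m : Fin (G.maxDegree + 1), ∑ j ∈ K m ∩ R, v i₀ j := by
            have hReq : R = Finset.univ.biUnion (fun m => K m ∩ R) := by
              ext x
              simp only [Finset.mem_biUnion, Finset.mem_univ, true_and, Finset.mem_inter]
              constructor
              · intro hx
                have : x ∈ Finset.univ.biUnion K := by rw [hKc]; exact Finset.mem_univ x
                rw [Finset.mem_biUnion] at this
                obtain ⟨m, _, hm⟩ := this
                exact ⟨m, hm, hx⟩
              · rintro ⟨m, _, hx⟩; exact hx
            conv_lhs => rw [hReq]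
            rw [Finset.sum_biUnion]
            intro a _ c _ hac
            exact ((hKd a c hac).mono Finset.inter_subset_left Finset.inter_subset_left)
          obtain ⟨m₀, _, hmax⟩ := (Finset.univ : Finset (Fin (G.maxDegree+1))).exists_max_image
            (fun m => ∑ j ∈ K m ∩ R, v i₀ j) ⟨0, Finset.mem_univ 0⟩
          have hclass : ∑ j ∈ R, v i₀ j ≤ ((G.maxDegree:ℝ)+1) * ∑ j ∈ K m₀ ∩ R, v i₀ j := by
            rw [hRsplit]
            have := Finset.sum_le_card_nsmul (Finset.univ : Finset (Fin (G.maxDegree+1)))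
              (fun m => ∑ j ∈ K m ∩ R, v i₀ j) (∑ j ∈ K m₀ ∩ R, v i₀ j) (fun m _ => hmax m (Finset.mem_univ m))
            rw [Finset.card_univ, Fintype.card_fin, nsmul_eq_mul] at this
            push_cast at this ⊢
            linarith
          refine ⟨K m₀ ∩ R, Finset.inter_subset_right, ?_, i₀, hi₀, ?_⟩
          · intro x hx y hy
            exact hKi m₀ x (Finset.mem_of_mem_inter_left hx) y (Finset.mem_of_mem_inter_left hy)
          · have hpos : (0:ℝ) < (G.maxDegree:ℝ)+1 := by positivity
            nlinarith [hRval, hclass]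
      -- Step 2: take a minimum-cardinality such bundle
      obtain ⟨B₀, hB₀R, hB₀i, hB₀w⟩ := hwit
      set S : Finset (Finset M) := R.powerset.filter
        (fun B => (∀ x ∈ B, ∀ y ∈ B, ¬ G.Adj x y) ∧ ∃ i ∈ U, τ i ≤ ∑ j ∈ B, v i j) with hSdef
      have hSne : S.Nonempty := ⟨B₀, by
        rw [hSdef, Finset.mem_filter, Finset.mem_powerset]
        exact ⟨hB₀R, hB₀i, hB₀w⟩⟩
      obtain ⟨B, hBS, hBmin⟩ := S.exists_min_image Finset.card hSne
      rw [hSdef, Finset.mem_filter, Finset.mem_powerset] at hBS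
      obtain ⟨hBR, hBi, k, hkU, hkval⟩ := hBS
      have hminer : ∀ j ∈ B, ∀ i ∈ U, ∑ x ∈ B.erase j, v i x < τ i := by
        intro j hj i hi
        by_contra hge
        push_neg at hge
        have hmem : B.erase j ∈ S := by
          rw [hSdef, Finset.mem_filter, Finset.mem_powerset]
          refine ⟨(Finset.erase_subset j B).trans hBR, ?_, i, hi, hge⟩
          intro x hx y hy
          exact hBi x (Finset.mem_of_mem_erase hx) y (Finset.mem_of_mem_erase hy)
        have := hBmin _ hmem
        rw [Finset.card_erase_of_mem hj] at this
        have : 0 < B.card := Finset.card_pos.2 ⟨j, hj⟩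
        omega
      have hUk : (U.erase k).card = u := by
        rw [Finset.card_erase_of_mem hkU, hcard]
        omega
      have hUcard : U.card + b ≤ (U.erase k).card + (b + 1) := by omega
      -- recursive call
      have hrec : ∃ A' : Fin n → Finset M, (∀ i, A' i ⊆ R \ B) ∧
          (∀ i i', i ≠ i' → Disjoint (A' i) (A' i')) ∧
          (∀ i, ∀ x ∈ A' i, ∀ y ∈ A' i, ¬ G.Adj x y) ∧
          (∀ i ∈ U.erase k, τ i ≤ ∑ j ∈ A' i, v i j) := by
        by_cases hcard1 : B.card = 1
        · -- singleton bundle: count it against the partition bundle containing it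
          obtain ⟨j, hBj⟩ := Finset.card_eq_one.1 hcard1
          apply ih (U.erase k) (R \ B) b hUk
          intro i hi
          obtain ⟨P, T, hPd, hPi, hPc, hTc, hTs⟩ := hINV i (Finset.mem_of_mem_erase hi)
          have hjmem : ∃ t₀, j ∈ P t₀ := by
            have : j ∈ Finset.univ.biUnion P := by rw [hPc]; exact Finset.mem_univ j
            rw [Finset.mem_biUnion] at this
            obtain ⟨t₀, _, ht₀⟩ := this
            exact ⟨t₀, ht₀⟩
          obtain ⟨t₀, ht₀⟩ := hjmem
          refine ⟨P, T.erase t₀, hPd, hPi, hPc, ?_, ?_⟩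
          · have h1 := Finset.pred_card_le_card_erase (s := T) (a := t₀)
            have hU1 : 1 ≤ U.card := Finset.card_pos.2 ⟨k, hkU⟩
            rw [Finset.card_erase_of_mem hkU]
            omega
          · have heq : ∀ t ∈ T.erase t₀, P t ∩ (R \ B) = P t ∩ R := by
              intro t ht
              ext x
              simp only [Finset.mem_inter, Finset.mem_sdiff, hBj, Finset.mem_singleton]
              constructor
              · rintro ⟨hP, hR, _⟩; exact ⟨hP, hR⟩
              · rintro ⟨hP, hR⟩
                refine ⟨hP, hR, ?_⟩
                rintro rfl
                exact (Finset.ne_of_mem_erase ht)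
                  (Finset.disjoint_left.1 (hPd t t₀ (Finset.ne_of_mem_erase ht)) hP ht₀ |>.elim)
              
            calc ∑ t ∈ T.erase t₀, max 0 (μ i - ∑ j' ∈ P t ∩ (R \ B), v i j')
                = ∑ t ∈ T.erase t₀, max 0 (μ i - ∑ j' ∈ P t ∩ R, v i j') := by
                  apply Finset.sum_congr rfl
                  intro t ht
                  rw [heq t ht]
              _ ≤ ∑ t ∈ T, max 0 (μ i - ∑ j' ∈ P t ∩ R, v i j') := by
                  apply Finset.sum_le_sum_of_subset_of_nonneg (Finset.erase_subset _ _)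
                  intro t _ _
                  exact le_max_left _ _
              _ ≤ 2*(b:ℝ)*τ i := hTs
        · -- small bundle: every unsatisfied agent values it at most 2τ
          have hsmall : ∀ i ∈ U, ∑ j ∈ B, v i j ≤ 2 * τ i := by
            intro i hi
            rcases Nat.lt_or_ge B.card 2 with hc | hc
            · -- card 0
              have hc0 : B.card = 0 := by omega
              rw [Finset.card_eq_zero] at hc0
              rw [hc0, Finset.sum_empty]
              linarith [hτ0 i]
            · obtain ⟨x, hx, y, hy, hxy⟩ := Finset.one_lt_card.1 (show 1 < B.card by omega)
              have h1 : ∑ j ∈ B, v i j = v i x + ∑ j ∈ B.erase x, v i j :=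
                (Finset.add_sum_erase B (v i) hx).symm
              have h2 : v i x ≤ ∑ j ∈ B.erase y, v i j := by
                apply Finset.single_le_sum (fun j _ => hv i j)
                exact Finset.mem_erase.2 ⟨hxy, hx⟩
              have h3 := hminer x hx i hi
              have h4 := hminer y hy i hi
              linarith
          apply ih (U.erase k) (R \ B) (b+1) hUk
          intro i hi
          obtain ⟨P, T, hPd, hPi, hPc, hTc, hTs⟩ := hINV i (Finset.mem_of_mem_erase hi)
          refine ⟨P, T, hPd, hPi, hPc, ?_, ?_⟩
          · omega
          have hdisjtB : ∀ t, Disjoint (P t ∩ (R \ B)) (P t ∩ B) := by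
            intro t
            rw [Finset.disjoint_left]
            intro x hx1 hx2
            exact (Finset.mem_sdiff.1 (Finset.mem_inter.1 hx1).2).2 (Finset.mem_inter.1 hx2).2
          have hsplit : ∀ t, ∑ j' ∈ P t ∩ R, v i j'
              = ∑ j' ∈ P t ∩ (R \ B), v i j' + ∑ j' ∈ P t ∩ B, v i j' := by
            intro t
            rw [← Finset.sum_union (hdisjtB t)]
            congr 1
            ext x
            simp only [Finset.mem_inter, Finset.mem_sdiff, Finset.mem_union]
            constructor
            · rintro ⟨hP, hR⟩
              by_cases hxB : x ∈ B
              · exact Or.inr ⟨hP, hxB⟩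
              · exact Or.inl ⟨hP, hR, hxB⟩
            · rintro (⟨hP, hR, _⟩ | ⟨hP, hxB⟩)
              · exact ⟨hP, hR⟩
              · exact ⟨hP, hBR hxB⟩
          have hBd : ∑ t ∈ T, ∑ j' ∈ P t ∩ B, v i j' ≤ ∑ j' ∈ B, v i j' := by
            rw [← Finset.sum_biUnion]
            · apply Finset.sum_le_sum_of_subset_of_nonneg
              · exact Finset.biUnion_subset.2 fun t _ => Finset.inter_subset_right
              · intro x _ _; exact hv i x
            · intro a _ c _ hac
              exact ((hPd a c hac).mono Finset.inter_subset_left Finset.inter_subset_left)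
          have hptw : ∀ t ∈ T, max 0 (μ i - ∑ j' ∈ P t ∩ (R \ B), v i j')
              ≤ max 0 (μ i - ∑ j' ∈ P t ∩ R, v i j') + ∑ j' ∈ P t ∩ B, v i j' := by
            intro t _
            have h5 := hsplit t
            have h6 : (0:ℝ) ≤ ∑ j' ∈ P t ∩ B, v i j' :=
              Finset.sum_nonneg (fun x _ => hv i x)
            apply max_le
            · have := le_max_left 0 (μ i - ∑ j' ∈ P t ∩ R, v i j')
              linarith
            · have := le_max_right 0 (μ i - ∑ j' ∈ P t ∩ R, v i j')
              linarith
          calc ∑ t ∈ T, max 0 (μ i - ∑ j' ∈ P t ∩ (R \ B), v i j')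
              ≤ ∑ t ∈ T, (max 0 (μ i - ∑ j' ∈ P t ∩ R, v i j') + ∑ j' ∈ P t ∩ B, v i j') :=
                Finset.sum_le_sum hptw
            _ = (∑ t ∈ T, max 0 (μ i - ∑ j' ∈ P t ∩ R, v i j')) + ∑ t ∈ T, ∑ j' ∈ P t ∩ B, v i j' :=
                Finset.sum_add_distrib
            _ ≤ 2*(b:ℝ)*τ i + ∑ j' ∈ B, v i j' := by
                have := hsmall i (Finset.mem_of_mem_erase hi)
                linarith [hTs, hBd]
            _ ≤ 2*(((b+1):ℕ):ℝ)*τ i := by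
                have := hsmall i (Finset.mem_of_mem_erase hi)
                push_cast
                linarith
      -- assemble
      obtain ⟨A', hA'sub, hA'd, hA'i, hA'val⟩ := hrec
      refine ⟨Function.update A' k B, ?_, ?_, ?_, ?_⟩
      · intro i
        by_cases hik : i = k
        · rw [hik, Function.update_self]; exact hBR
        · rw [Function.update_of_ne hik]
          exact (hA'sub i).trans (Finset.sdiff_subset)
      · intro a c hac
        by_cases hak : a = k
        · subst hak
          rw [Function.update_self, Function.update_of_ne (fun h => hac h.symm)]
          rw [Finset.disjoint_right]
          intro x hx
          exact (Finset.mem_sdiff.1 (hA'sub c hx)).2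
        · rw [Function.update_of_ne hak]
          by_cases hck : c = k
          · subst hck
            rw [Function.update_self, Finset.disjoint_left]
            intro x hx
            exact (Finset.mem_sdiff.1 (hA'sub a hx)).2
          · rw [Function.update_of_ne hck]
            exact hA'd a c hac
      · intro i
        by_cases hik : i = k
        · rw [hik, Function.update_self]; exact hBi
        · rw [Function.update_of_ne hik]; exact hA'i i
      · intro i hi
        by_cases hik : i = k
        · rw [hik, Function.update_self]; exact hik ▸ hkval
        · rw [Function.update_of_ne hik]
          exact hA'val i (Finset.mem_erase.2 ⟨hik, hi⟩)

end helpers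

/-- Polynomial-time achievable MMS approximation (`thr:mms-approx-polytime`,
existence part): for every instance with `n > Δ(G)` agents, letting `α = 1/2`
if `Δ(G) = 1`, `α = 3/7` if `Δ(G) = 2`, and `α = 2/(Δ(G)+2)` if `Δ(G) > 2`, a
feasible `α`-approximate MMS allocation exists; moreover `α > 1/Δ(G)` when
`Δ(G) > 2`. -/
theorem mms_approx_polytime {M : Type*} [Fintype M] [DecidableEq M]
    (G : SimpleGraph M) [DecidableRel G.Adj] (n : ℕ) (hΔ : G.maxDegree < n)
    (v : Fin n → M → ℝ) (hv : ∀ i j, 0 ≤ v i j) (α : ℝ)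
    (hα : (G.maxDegree = 1 ∧ α = 1 / 2) ∨ (G.maxDegree = 2 ∧ α = 3 / 7) ∨
      (2 < G.maxDegree ∧ α = 2 / ((G.maxDegree : ℝ) + 2))) :
    (2 < G.maxDegree → 1 / (G.maxDegree : ℝ) < α) ∧
      ∃ A : Fin n → Finset M, IsAllocation A ∧ FeasibleAlloc G A ∧
        ∀ i : Fin n, α * mmsOn n G Finset.univ (v i) ≤ ∑ j ∈ A i, v i j := by
  classical
  have hn0 : 0 < n := lt_of_le_of_lt (Nat.zero_le _) hΔ
  haveI : Nonempty (Fin n) := ⟨⟨0, hn0⟩⟩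
  constructor
  · -- the bound α > 1/Δ when Δ > 2
    intro h2D
    rcases hα with ⟨h1, _⟩ | ⟨h1, _⟩ | ⟨h1, h2⟩
    · omega
    · omega
    · have hD : (2:ℝ) < (G.maxDegree:ℝ) := by exact_mod_cast h2D
      rw [h2, div_lt_div_iff₀ (by linarith) (by linarith)]
      linarith
  -- key arithmetic facts
  have hfacts : (1:ℝ) ≤ (G.maxDegree:ℝ) ∧ 0 < α ∧
      α * (3*(G.maxDegree:ℝ)+1) ≤ (G.maxDegree:ℝ)+1 := by
    rcases hα with ⟨h1, h2⟩ | ⟨h1, h2⟩ | ⟨h1, h2⟩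
    · rw [h1, h2]; norm_num
    · rw [h1, h2]; norm_num
    · have hD : (2:ℝ) < (G.maxDegree:ℝ) := by exact_mod_cast h1
      subst h2
      have hD3 : (3:ℝ) ≤ (G.maxDegree:ℝ) := by exact_mod_cast h1
      refine ⟨by linarith, by positivity, ?_⟩
      rw [div_mul_eq_mul_div, div_le_iff₀ (by linarith)]
      nlinarith [mul_nonneg (show (0:ℝ) ≤ (G.maxDegree:ℝ)-3 by linarith)
        (show (0:ℝ) ≤ (G.maxDegree:ℝ) by linarith)]
  obtain ⟨hD1, hα0, hkey⟩ := hfacts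
  -- a feasible partition of all items into n bundles
  obtain ⟨A₀, _, hA₀d, hA₀i, hA₀c⟩ := extend_alloc G hΔ (Finset.univ : Finset M)
    (fun _ => ∅) (fun _ _ _ => Finset.disjoint_empty_left _)
    (fun _ x hx => absurd hx (Finset.notMem_empty x))
    (fun _ => Finset.disjoint_empty_left _)
  have hA₀c' : Finset.univ.biUnion A₀ = (Finset.univ : Finset M) := by
    rw [hA₀c]; simp
  -- a proper coloring with Δ+1 colors
  obtain ⟨K, _, hKd, hKi, hKc⟩ := extend_alloc G (Nat.lt_succ_self G.maxDegree)
    (Finset.univ : Finset M)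
    (fun _ => ∅) (fun _ _ _ => Finset.disjoint_empty_left _)
    (fun _ x hx => absurd hx (Finset.notMem_empty x))
    (fun _ => Finset.disjoint_empty_left _)
  have hKc' : Finset.univ.biUnion K = (Finset.univ : Finset M) := by
    rw [hKc]; simp
  -- μ and optimal partitions
  set μ : Fin n → ℝ := fun i => mmsOn n G Finset.univ (v i) with hμdef
  have hopt : ∀ i, (∃ P : Fin n → Finset M,
      (∀ t t', t ≠ t' → Disjoint (P t) (P t')) ∧
      (∀ t, ∀ x ∈ P t, ∀ y ∈ P t, ¬ G.Adj x y) ∧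
      Finset.univ.biUnion P = Finset.univ ∧
      (∀ t, μ i ≤ ∑ j ∈ P t, v i j)) ∧ 0 ≤ μ i := by
    intro i
    have hμi : μ i = sSup {x : ℝ | ∃ A : Fin n → Finset M,
        (∀ i' i'' : Fin n, i' ≠ i'' → Disjoint (A i') (A i'')) ∧
        Finset.univ.biUnion A = (Finset.univ : Finset M) ∧
        (∀ i' : Fin n, ∀ j ∈ A i', ∀ j' ∈ A i', ¬ G.Adj j j') ∧
        x = ⨅ i' : Fin n, ∑ j ∈ A i', v i j} := rfl
    set Sset := {x : ℝ | ∃ A : Fin n → Finset M,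
        (∀ i' i'' : Fin n, i' ≠ i'' → Disjoint (A i') (A i'')) ∧
        Finset.univ.biUnion A = (Finset.univ : Finset M) ∧
        (∀ i' : Fin n, ∀ j ∈ A i', ∀ j' ∈ A i', ¬ G.Adj j j') ∧
        x = ⨅ i' : Fin n, ∑ j ∈ A i', v i j} with hSsetdef
    have hne : Sset.Nonempty :=
      ⟨⨅ t : Fin n, ∑ j ∈ A₀ t, v i j, A₀, hA₀d, hA₀c', hA₀i, rfl⟩
    have hfin : Sset.Finite := by
      apply Set.Finite.subset (Set.finite_range
        (fun A : Fin n → Finset M => ⨅ t : Fin n, ∑ j ∈ A t, v i j))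
      rintro x ⟨A, _, _, _, h4⟩
      exact ⟨A, h4.symm⟩
    have hmem : sSup Sset ∈ Sset := hne.csSup_mem hfin
    obtain ⟨P, h1, h2, h3, h4⟩ := hmem
    constructor
    · refine ⟨P, h1, h3, h2, ?_⟩
      intro t
      rw [hμi, h4]
      exact ciInf_le (Finite.bddBelow_range _) t
    · rw [hμi, h4]
      exact le_ciInf (fun t => Finset.sum_nonneg (fun x _ => hv i x))
  set τ : Fin n → ℝ := fun i => α * μ i with hτdef
  have hμ0 : ∀ i, 0 ≤ μ i := fun i => (hopt i).2
  have hτ0 : ∀ i, 0 ≤ τ i := fun i => mul_nonneg hα0.le (hμ0 i)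
  -- the per-b arithmetic disjunction
  have hbα : ∀ b : ℕ, (3*(b:ℝ)+1) * α ≤ (b:ℝ)+1 ∨
      (2*(b:ℝ)+(G.maxDegree:ℝ)+1) * α ≤ (b:ℝ)+1 := by
    intro b
    rcases le_total (b:ℝ) (G.maxDegree:ℝ) with h | h
    · left
      nlinarith [mul_le_mul_of_nonneg_left hkey (show (0:ℝ) ≤ 3*(b:ℝ)+1 by positivity),
        show (0:ℝ) < 3*(G.maxDegree:ℝ)+1 by positivity, h, hα0.le]
    · right
      nlinarith [mul_le_mul_of_nonneg_left hkey
          (show (0:ℝ) ≤ 2*(b:ℝ)+(G.maxDegree:ℝ)+1 by positivity),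
        show (0:ℝ) < 3*(G.maxDegree:ℝ)+1 by positivity,
        mul_nonneg (sub_nonneg.2 hD1) (sub_nonneg.2 h), hα0.le]
  have hbfull : ∀ i, ∀ b : ℕ, (3*(b:ℝ)+1) * τ i ≤ ((b:ℝ)+1) * μ i ∨
      (2*(b:ℝ)+(G.maxDegree:ℝ)+1) * τ i ≤ ((b:ℝ)+1) * μ i := by
    intro i b
    rcases hbα b with h | h
    · left
      show (3*(b:ℝ)+1) * (α * μ i) ≤ ((b:ℝ)+1) * μ i
      nlinarith [mul_le_mul_of_nonneg_right h (hμ0 i)]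
    · right
      show (2*(b:ℝ)+(G.maxDegree:ℝ)+1) * (α * μ i) ≤ ((b:ℝ)+1) * μ i
      nlinarith [mul_le_mul_of_nonneg_right h (hμ0 i)]
  -- base invariant and core call
  have hbase : ∀ i ∈ (Finset.univ : Finset (Fin n)), ∃ (P : Fin n → Finset M) (T : Finset (Fin n)),
      (∀ t t', t ≠ t' → Disjoint (P t) (P t')) ∧
      (∀ t, ∀ x ∈ P t, ∀ y ∈ P t, ¬ G.Adj x y) ∧
      Finset.univ.biUnion P = Finset.univ ∧
      (Finset.univ : Finset (Fin n)).card + 0 ≤ T.card ∧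
      ∑ t ∈ T, max 0 (μ i - ∑ j ∈ P t ∩ (Finset.univ : Finset M), v i j) ≤ 2*((0:ℕ):ℝ)* τ i := by
    intro i _
    obtain ⟨⟨P, h1, h2, h3, h4⟩, _⟩ := hopt i
    refine ⟨P, Finset.univ, h1, h2, h3, by omega, ?_⟩
    have hz : ∀ t ∈ (Finset.univ : Finset (Fin n)),
        max 0 (μ i - ∑ j ∈ P t ∩ (Finset.univ : Finset M), v i j) = 0 := by
      intro t _
      rw [Finset.inter_univ]
      exact max_eq_left (by linarith [h4 t])
    rw [Finset.sum_congr rfl hz]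
    simp
  obtain ⟨A, hAsub, hAd, hAi, hAval⟩ := core G v hv μ τ hμ0 hτ0 hbfull K hKd hKi hKc'
    (Finset.univ : Finset (Fin n)).card (Finset.univ : Finset (Fin n))
    (Finset.univ : Finset M) 0 rfl hbase
  -- distribute the leftover items
  set L : Finset M := Finset.univ \ Finset.univ.biUnion A with hLdef
  have hdisjL : ∀ i, Disjoint (A i) L := by
    intro i
    rw [Finset.disjoint_right]
    intro x hx
    rw [hLdef, Finset.mem_sdiff] at hx
    intro hxA
    exact hx.2 (Finset.mem_biUnion.2 ⟨i, Finset.mem_univ i, hxA⟩)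
  obtain ⟨A', hsub, hd, hi2, hc⟩ := extend_alloc G hΔ L A hAd hAi hdisjL
  have hcover : Finset.univ.biUnion A' = (Finset.univ : Finset M) := by
    rw [hc, hLdef, Finset.union_sdiff_of_subset (Finset.subset_univ _)]
  refine ⟨A', ⟨hd, hcover⟩, hi2, ?_⟩
  intro i
  have h1 : τ i ≤ ∑ j ∈ A i, v i j := hAval i (Finset.mem_univ i)
  have h2 : ∑ j ∈ A i, v i j ≤ ∑ j ∈ A' i, v i j :=
    Finset.sum_le_sum_of_subset_of_nonneg (hsub i) (fun x _ _ => hv i x)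
  calc α * mmsOn n G Finset.univ (v i) = τ i := rfl
    _ ≤ ∑ j ∈ A i, v i j := h1
    _ ≤ ∑ j ∈ A' i, v i j := h2
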